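/- arXiv:1509.06670 — 3 statements merged into one kernel-verified Lean document; each statement's English description precedes it below -/
import Mathlib

section
/- Let F(x,y) be a homogeneous polynomial and let γ ∈ SL₂(K) act on polynomials by (γF)(v) = F(γ⁻¹v). If γF = χ(γ)F for a scalar χ(γ), then the projective map f_G = (−∂F/∂y : ∂F/∂x) satisfies f_G ∘ γ = γ ∘ f_G as projective maps (i.e., γ ∈ Aut(f_G)). -/
open MvPolynomial

lemma pderiv_aeval_chain {n : ℕ} {K : Type*} [CommRing K]
    (g : Fin n → MvPolynomial (Fin n) K) (i : Fin n) (p : MvPolynomial (Fin n) K) :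
    pderiv i (aeval g p) = ∑ k, aeval g (pderiv k p) * pderiv i (g k) := by
  induction p using MvPolynomial.induction_on with
  | C a => simp
  | add p q hp hq => simp only [map_add, hp, hq, Finset.sum_add_distrib, add_mul]
  | mul_X p j hp =>
    simp only [map_mul, aeval_X, pderiv_mul, hp, pderiv_X, Finset.sum_mul, map_add,
      Finset.sum_add_distrib, add_mul]
    congr 1
    · apply Finset.sum_congr rfl
      intro k _
      ring
    · rw [Finset.sum_eq_single j]
      · simp
      · intro k _ hk
        simp [Pi.single_apply, hk.symm]
      · simp

theorem klein_equivariant {K : Type*} [Field K] [CharZero K] (d : ℕ) (hd : 1 ≤ d)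
    (F : MvPolynomial (Fin 2) K) (hF : F.IsHomogeneous (d + 1))
    (γ : Matrix (Fin 2) (Fin 2) K) (hγ : γ.det = 1)
    (χ : K) (hχ : χ ≠ 0)
    (hinv : aeval (fun i => ∑ j, C (γ⁻¹ i j) * X j) F = C χ * F) :
    ∃ c : K, c ≠ 0 ∧
      aeval (fun i => ∑ j, C (γ i j) * X j) (-(pderiv 1 F)) =
        C c * (C (γ 0 0) * (-(pderiv 1 F)) + C (γ 0 1) * pderiv 0 F) ∧
      aeval (fun i => ∑ j, C (γ i j) * X j) (pderiv 0 F) =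
        C c * (C (γ 1 0) * (-(pderiv 1 F)) + C (γ 1 1) * pderiv 0 F) := by
  set g : Fin 2 → MvPolynomial (Fin 2) K := fun i => ∑ j, C (γ i j) * X j with hg
  set h : Fin 2 → MvPolynomial (Fin 2) K := fun i => ∑ j, C (γ⁻¹ i j) * X j with hh
  have hγinv : γ⁻¹ * γ = 1 := Matrix.nonsing_inv_mul γ (by simp [hγ])
  -- composing the two substitutions gives the identity
  have hcomp : aeval g (aeval h F) = F := by
    rw [show aeval h F = bind₁ h F from rfl, show (aeval g : MvPolynomial (Fin 2) K →ₐ[K] _)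
      = bind₁ g from rfl, bind₁_bind₁]
    have hid : (fun i => bind₁ g (h i)) = (X : Fin 2 → MvPolynomial (Fin 2) K) := by
      funext i
      simp only [hh, map_sum, map_mul, bind₁_C_right, bind₁_X_right, hg, Finset.mul_sum]
      rw [Finset.sum_comm]
      have : ∀ k : Fin 2, ∑ j, C (γ⁻¹ i j) * (C (γ j k) * X k) = C ((γ⁻¹ * γ) i k) * X k := by
        intro k
        rw [Matrix.mul_apply, map_sum, Finset.sum_mul]
        apply Finset.sum_congr rfl
        intro j _
        rw [← mul_assoc, ← C_mul]
      simp only [this, hγinv]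
      rw [Fin.sum_univ_two]
      fin_cases i <;> simp [Matrix.one_apply]
    rw [hid, bind₁_X_left, AlgHom.id_apply]
  have hgF : aeval g F = C χ⁻¹ * F := by
    have h1 : F = C χ * aeval g F := by
      conv_lhs => rw [← hcomp, hinv]
      rw [map_mul, aeval_C, algebraMap_eq]
    have : C χ⁻¹ * F = C χ⁻¹ * (C χ * aeval g F) := by rw [← h1]
    rw [this, ← mul_assoc, ← C_mul, inv_mul_cancel₀ hχ, C_1, one_mul]
  have hpg : ∀ k i : Fin 2, pderiv i (g k) = C (γ k i) := by
    intro k i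
    simp only [hg, map_sum, pderiv_C_mul, pderiv_X, Pi.single_apply]
    simp [mul_ite, Finset.sum_ite_eq]
  have key : ∀ i : Fin 2, C χ⁻¹ * pderiv i F =
      aeval g (pderiv 0 F) * C (γ 0 i) + aeval g (pderiv 1 F) * C (γ 1 i) := by
    intro i
    have := pderiv_aeval_chain g i F
    rw [hgF, pderiv_C_mul] at this
    rw [this, Fin.sum_univ_two, hpg, hpg]
  have hdetC : C (γ 0 0) * C (γ 1 1) - C (γ 0 1) * C (γ 1 0) = (1 : MvPolynomial (Fin 2) K) := by
    rw [← C_mul, ← C_mul, ← C_sub, ← Matrix.det_fin_two, hγ, C_1]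
  refine ⟨χ⁻¹, inv_ne_zero hχ, ?_, ?_⟩
  · rw [map_neg]
    linear_combination (-(C (γ 0 1))) * key 0 + (C (γ 0 0)) * key 1
      + aeval g (pderiv 1 F) * hdetC
  · linear_combination (-(C (γ 1 1))) * key 0 + (C (γ 1 0)) * key 1
      - aeval g (pderiv 0 F) * hdetC
end

section
/- Suppose F, G ∈ ℚ̄[x,y] are homogeneous with deg G = deg F + 2, and the map with coordinates (xF/2 + G_y, yF/2 − G_x) has both coordinates in ℚ[x,y]. If F has a monomial c·x^n y^m with coefficient c, then comparing coefficients forces c ∈ ℚ, and more strongly if c ∉ ℚ then c = 0; hence both F and G are defined over ℚ. -/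
/-!
Write `P = xF/2 + G_y`, `Q = yF/2 - G_x` and `e₀, e₁` for the unit exponents. Comparing
coefficients, `P_{m+e₀} = F_m/2 + (m₁+1) G_{m+e₀+e₁}` and
`Q_{m+e₁} = F_m/2 - (m₀+1) G_{m+e₀+e₁}`, so
`(m₀+1) P_{m+e₀} + (m₁+1) Q_{m+e₁} = (m₀+m₁+2) F_m / 2` and `F_m` is rational. Every coefficient of `G` other than the constant one is then read off from
`P` or `Q`; the constant one vanishes since `G` is homogeneous of positive degree.
-/

open MvPolynomial Finsupp

namespace MvPolynomial

section

variable {σ R : Type*}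

theorem coeff_X_mul_mem [CommSemiring R] {A : Type*} [SetLike A R] [ZeroMemClass A R] {S : A}
    {p : MvPolynomial σ R} (hp : ∀ m, p.coeff m ∈ S) (i : σ) (m : σ →₀ ℕ) :
    (X i * p).coeff m ∈ S := by
  classical
  rw [coeff_X_mul']
  split_ifs
  exacts [hp _, zero_mem S]

theorem coeff_C_mul_X_mul_add_pderiv [CommSemiring R] (c : R) (i j : σ) (F G : MvPolynomial σ R)
    (m : σ →₀ ℕ) :
    (C c * X i * F + pderiv j G).coeff m =
      c * (X i * F).coeff m + G.coeff (m + single j 1) * (m j + 1) := by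
  rw [coeff_add, mul_assoc, coeff_C_mul, coeff_pderiv]

theorem coeff_C_mul_X_mul_sub_pderiv [CommRing R] (c : R) (i j : σ) (F G : MvPolynomial σ R)
    (m : σ →₀ ℕ) :
    (C c * X i * F - pderiv j G).coeff m =
      c * (X i * F).coeff m - G.coeff (m + single j 1) * (m j + 1) := by
  rw [coeff_sub, mul_assoc, coeff_C_mul, coeff_pderiv]

end

end MvPolynomial

theorem Finsupp.exists_eq_add_single_one {σ : Type*} {m : σ →₀ ℕ} (hm : m ≠ 0) :
    ∃ i n, m = n + single i 1 := by
  obtain ⟨i, hi⟩ := Finsupp.ne_iff.1 hm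
  have hle : single i 1 ≤ m := single_le_iff.2 (Nat.one_le_iff_ne_zero.2 hi)
  exact ⟨i, m - single i 1, (tsub_add_cancel_of_le hle).symm⟩

namespace DoyleMcMullen

variable {K : Type*} [Field K] [CharZero K] (S : Subfield K) {F G : MvPolynomial (Fin 2) K}

theorem coeff_F_mem (hP : ∀ m, (C (1 / 2 : K) * X 0 * F + pderiv 1 G).coeff m ∈ S)
    (hQ : ∀ m, (C (1 / 2 : K) * X 1 * F - pderiv 0 G).coeff m ∈ S) (m : Fin 2 →₀ ℕ) :
    F.coeff m ∈ S := by
  set p := (C (1 / 2 : K) * X 0 * F + pderiv 1 G).coeff (m + single 0 1) with hp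
  set q := (C (1 / 2 : K) * X 1 * F - pderiv 0 G).coeff (m + single 1 1) with hq
  have hdeg : (m 0 + m 1 + 2 : K) ≠ 0 := by norm_cast
  have key : F.coeff m = 2 * ((m 0 + 1) * p + (m 1 + 1) * q) / (m 0 + m 1 + 2) := by
    have hX : ∀ i, (X i * F).coeff (m + single i 1) = F.coeff m := fun i => by
      rw [add_comm, coeff_X_mul]
    rw [eq_div_iff hdeg, hp, hq, coeff_C_mul_X_mul_add_pderiv, coeff_C_mul_X_mul_sub_pderiv, hX, hX,
      add_right_comm m (single 1 1)]
    simp only [Finsupp.add_apply, single_apply]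
    norm_num
    ring
  rw [key]
  have := hP (m + single 0 1)
  have := hQ (m + single 1 1)
  apply_rules [div_mem, mul_mem, add_mem, natCast_mem, one_mem, ofNat_mem]

theorem coeff_G_add_single_one_mem
    (hP : ∀ m, (C (1 / 2 : K) * X 0 * F + pderiv 1 G).coeff m ∈ S) (hF : ∀ m, F.coeff m ∈ S)
    (n : Fin 2 →₀ ℕ) : G.coeff (n + single 1 1) ∈ S := by
  have hn : (n 1 + 1 : K) ≠ 0 := by norm_cast
  have key : G.coeff (n + single 1 1) =
      ((C (1 / 2 : K) * X 0 * F + pderiv 1 G).coeff n - 1 / 2 * (X 0 * F).coeff n) / (n 1 + 1) := by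
    rw [eq_div_iff hn, coeff_C_mul_X_mul_add_pderiv]
    ring
  rw [key]
  have := hP n
  have := coeff_X_mul_mem hF 0 n
  apply_rules [div_mem, sub_mem, mul_mem, add_mem, natCast_mem, one_mem, ofNat_mem]

theorem coeff_G_add_single_zero_mem
    (hQ : ∀ m, (C (1 / 2 : K) * X 1 * F - pderiv 0 G).coeff m ∈ S) (hF : ∀ m, F.coeff m ∈ S)
    (n : Fin 2 →₀ ℕ) : G.coeff (n + single 0 1) ∈ S := by
  have hn : (n 0 + 1 : K) ≠ 0 := by norm_cast
  have key : G.coeff (n + single 0 1) =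
      (1 / 2 * (X 1 * F).coeff n - (C (1 / 2 : K) * X 1 * F - pderiv 0 G).coeff n) / (n 0 + 1) := by
    rw [eq_div_iff hn, coeff_C_mul_X_mul_sub_pderiv]
    ring
  rw [key]
  have := hQ n
  have := coeff_X_mul_mem hF 1 n
  apply_rules [div_mem, sub_mem, mul_mem, add_mem, natCast_mem, one_mem, ofNat_mem]

theorem coeff_G_mem {d : ℕ} (hG : G.IsHomogeneous d) (hd : d ≠ 0)
    (hP : ∀ m, (C (1 / 2 : K) * X 0 * F + pderiv 1 G).coeff m ∈ S)
    (hQ : ∀ m, (C (1 / 2 : K) * X 1 * F - pderiv 0 G).coeff m ∈ S) (hF : ∀ m, F.coeff m ∈ S)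
    (m : Fin 2 →₀ ℕ) : G.coeff m ∈ S := by
  obtain rfl | hm := eq_or_ne m 0
  · rw [hG.coeff_eq_zero (by simpa using hd.symm)]
    exact zero_mem S
  obtain ⟨i, n, rfl⟩ := exists_eq_add_single_one hm
  fin_cases i
  exacts [coeff_G_add_single_zero_mem S hQ hF n, coeff_G_add_single_one_mem S hP hF n]

end DoyleMcMullen

theorem doyle_mcmullen_rationality_general {K : Type*} [Field K] [CharZero K] (dF : ℕ)
    (F G : MvPolynomial (Fin 2) K)
    (hG : G.IsHomogeneous (dF + 2))
    (hP : ∀ m, (C (1 / 2 : K) * X 0 * F + pderiv 1 G).coeff m ∈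
      Set.range ((↑) : ℚ → K))
    (hQ : ∀ m, (C (1 / 2 : K) * X 1 * F - pderiv 0 G).coeff m ∈
      Set.range ((↑) : ℚ → K)) :
    (∀ m, F.coeff m ∈ Set.range ((↑) : ℚ → K)) ∧
    (∀ m, G.coeff m ∈ Set.range ((↑) : ℚ → K)) := by
  let S := (Rat.castHom K).fieldRange
  have hF : ∀ m, F.coeff m ∈ S := DoyleMcMullen.coeff_F_mem S hP hQ
  exact ⟨hF, DoyleMcMullen.coeff_G_mem S hG (by omega) hP hQ hF⟩

theorem doyle_mcmullen_rationality {K : Type*} [Field K] [CharZero K] (dF : ℕ)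
    (F G : MvPolynomial (Fin 2) K)
    (hF : F.IsHomogeneous dF) (hG : G.IsHomogeneous (dF + 2))
    (hP : ∀ m, (C (1 / 2 : K) * X 0 * F + pderiv 1 G).coeff m ∈
      Set.range ((↑) : ℚ → K))
    (hQ : ∀ m, (C (1 / 2 : K) * X 1 * F - pderiv 0 G).coeff m ∈
      Set.range ((↑) : ℚ → K)) :
    (∀ m, F.coeff m ∈ Set.range ((↑) : ℚ → K)) ∧
    (∀ m, G.coeff m ∈ Set.range ((↑) : ℚ → K)) :=
  doyle_mcmullen_rationality_general dF F G hG hP hQ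
end

section
/- Let f(x,y,z) = (y^d, z^d, x^d) as a map on P² and let α be the diagonal projective transformation (x,y,z) ↦ (ζ x, ζ^{−d} y, z) where ζ is a primitive (d²+d+1)-th root of unity. Then α⁻¹ ∘ f ∘ α = f as projective maps, so α ∈ Aut(f) and Aut(f) contains a cyclic group of order d²+d+1. -/
theorem inv_pow_sq_eq_pow_succ {M : Type*} [DivisionMonoid M] {ζ : M} {d : ℕ}
    (h : ζ ^ (d ^ 2 + d + 1) = 1) : ζ⁻¹ ^ d ^ 2 = ζ ^ (d + 1) := by
  rw [inv_pow]
  exact inv_eq_of_mul_eq_one_right (by rw [← pow_add, ← add_assoc, h])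

theorem cyclic_aut_of_monomial_map_general {K : Type*} [Field K] (d : ℕ)
    (ζ : K) (hζ : IsPrimitiveRoot ζ (d ^ 2 + d + 1)) :
    ∃ c : K, c ≠ 0 ∧ ∀ x y z : K,
      ((ζ⁻¹) ^ d * y) ^ d = c * (ζ * y ^ d) ∧
      z ^ d = c * ((ζ⁻¹) ^ d * z ^ d) ∧
      (ζ * x) ^ d = c * x ^ d := by
  have hζ0 : ζ ≠ 0 := hζ.ne_zero (by positivity)
  refine ⟨ζ ^ d, pow_ne_zero d hζ0, fun x y z => ⟨?_, ?_, ?_⟩⟩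
  · rw [mul_pow, ← pow_mul, ← sq, inv_pow_sq_eq_pow_succ hζ.pow_eq_one]
    ring
  · rw [inv_pow, mul_inv_cancel_left₀ (pow_ne_zero d hζ0)]
  · ring

theorem cyclic_aut_of_monomial_map {K : Type*} [Field K] (d : ℕ) (hd : 2 ≤ d)
    (ζ : K) (hζ : IsPrimitiveRoot ζ (d ^ 2 + d + 1)) :
    ∃ c : K, c ≠ 0 ∧ ∀ x y z : K,
      ((ζ⁻¹) ^ d * y) ^ d = c * (ζ * y ^ d) ∧
      z ^ d = c * ((ζ⁻¹) ^ d * z ^ d) ∧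
      (ζ * x) ^ d = c * x ^ d :=
  cyclic_aut_of_monomial_map_general d ζ hζ
end
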